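/- Let θ ∈ ℝ with cos(θ/2) ≠ 0, and suppose ω = 2(1 − cos θ). Then for every natural number n, τ_n = 2·cos((n − 1/2)·θ)/cos(θ/2). -/
import Mathlib


open Matrix

/-- The matrix `X = [[1,1],[0,1]]`. -/
noncomputable def Xmat : Matrix (Fin 2) (Fin 2) ℂ := !![1, 1; 0, 1]

/-- The matrix `Y = [[1,0],[ω,1]]`. -/
noncomputable def Ymat (ω : ℂ) : Matrix (Fin 2) (Fin 2) ℂ := !![1, 0; ω, 1]

/-- `τ n` is the trace of `X ⬝ (Y ⬝ X⁻¹)^n`. -/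
noncomputable def τ (ω : ℂ) (n : ℕ) : ℂ := (Xmat * (Ymat ω * Xmat⁻¹) ^ n).trace

lemma Xmat_inv : Xmat⁻¹ = !![1, -1; 0, 1] := by
  apply inv_eq_right_inv
  simp [Xmat, Matrix.mul_fin_two]
  exact (Matrix.etaExpand_eq (1 : Matrix (Fin 2) (Fin 2) ℂ))

lemma M_sq (ω : ℂ) :
    (Ymat ω * Xmat⁻¹) ^ 2 = (2 - ω) • (Ymat ω * Xmat⁻¹) - 1 := by
  rw [Xmat_inv, Ymat]
  ext i j
  fin_cases i <;> fin_cases j <;>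
    simp [pow_two, Matrix.mul_apply, Fin.sum_univ_two, Matrix.one_apply] <;> ring

lemma tau_rec (ω : ℂ) (n : ℕ) :
    τ ω (n + 2) = (2 - ω) * τ ω (n + 1) - τ ω n := by
  unfold τ
  have h : (Ymat ω * Xmat⁻¹) ^ (n + 2)
      = (2 - ω) • (Ymat ω * Xmat⁻¹) ^ (n + 1) - (Ymat ω * Xmat⁻¹) ^ n := by
    have := M_sq ω
    calc (Ymat ω * Xmat⁻¹) ^ (n + 2) = (Ymat ω * Xmat⁻¹) ^ n * (Ymat ω * Xmat⁻¹) ^ 2 := by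
          rw [← pow_add]
      _ = (Ymat ω * Xmat⁻¹) ^ n * ((2 - ω) • (Ymat ω * Xmat⁻¹) - 1) := by rw [this]
      _ = (2 - ω) • (Ymat ω * Xmat⁻¹) ^ (n + 1) - (Ymat ω * Xmat⁻¹) ^ n := by
          rw [Matrix.mul_sub, Matrix.mul_smul, mul_one, pow_succ]
  rw [h, Matrix.mul_sub, Matrix.mul_smul, trace_sub, trace_smul, smul_eq_mul]

theorem tau_cosine_form (ω : ℂ) (θ : ℝ) (hcos : Real.cos (θ / 2) ≠ 0)
    (hω : ω = 2 * (1 - (Real.cos θ : ℂ))) :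
    ∀ n : ℕ,
      τ ω n = ((2 * Real.cos (((n : ℝ) - 1 / 2) * θ) / Real.cos (θ / 2) : ℝ) : ℂ) := by
  have hω' : (2 : ℂ) - ω = 2 * Real.cos θ := by rw [hω]; ring
  intro n
  induction n using Nat.twoStepInduction with
  | zero =>
      have h0 : τ ω 0 = 2 := by
        simp [τ, Xmat, Matrix.trace_fin_two]
        norm_num
      have hr : 2 * Real.cos ((((0:ℕ):ℝ) - 1 / 2) * θ) / Real.cos (θ / 2) = 2 := by
        rw [show ((((0:ℕ):ℝ)) - 1/2) * θ = -(θ/2) by push_cast; ring, Real.cos_neg]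
        field_simp
      rw [h0, hr]
      norm_num
  | one =>
      have h1 : τ ω 1 = 2 := by
        unfold τ
        rw [pow_one, Xmat_inv]
        simp [Xmat, Ymat, Matrix.trace_fin_two, Matrix.mul_apply, Fin.sum_univ_two]
        ring
      have hr : 2 * Real.cos ((((1:ℕ):ℝ) - 1 / 2) * θ) / Real.cos (θ / 2) = 2 := by
        rw [show ((((1:ℕ):ℝ)) - 1/2) * θ = θ/2 by push_cast; ring]
        field_simp
      rw [h1, hr]
      norm_num
  | more n ih1 ih2 =>
      have hkey : 2 * Real.cos θ * (2 * Real.cos ((((n+1:ℕ):ℝ) - 1/2) * θ) / Real.cos (θ/2))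
          - 2 * Real.cos (((n:ℝ) - 1/2) * θ) / Real.cos (θ/2)
          = 2 * Real.cos ((((n+2:ℕ):ℝ) - 1/2) * θ) / Real.cos (θ/2) := by
        push_cast
        rw [show ((n:ℝ) + 2 - 1/2) * θ = ((n:ℝ) + 1 - 1/2) * θ + θ by ring,
          show ((n:ℝ) - 1/2) * θ = ((n:ℝ) + 1 - 1/2) * θ - θ by ring,
          Real.cos_add, Real.cos_sub]
        field_simp
        ring
      have cast2 : ∀ r s : ℝ, ((2:ℂ) * (Real.cos θ : ℂ)) * (r:ℂ) - (s:ℂ)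
          = ((2 * Real.cos θ * r - s : ℝ) : ℂ) := by
        intro r s; push_cast; ring
      rw [tau_rec, ih1, ih2, hω', cast2]
      exact congrArg Complex.ofReal hkey
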